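/- Let σ : ℕ → ℚ satisfy σ 0 = 0, σ 1 = 1/2 and, for every n ≥ 2, σ n = (1/2)·Σ_{l=1}^{n-1} σ l · σ (n-l); let κ : ℕ → ℚ satisfy κ 0 = 1 and, for every n ≥ 1, κ n = Σ_{m=1}^{n} κ (n-m) · σ m. Define c_n := (1/2)·Σ_{l=0}^{n} κ l · κ (n-l). Then c_n = 1/2 for every n ≥ 0; equivalently Σ_{l=0}^{n} κ l · κ (n-l) = 1 for every n. -/

import Mathlib

/-!
Work with the generating functions `S = ∑ σ n Xⁿ` and `K = ∑ κ n Xⁿ`. The recursion for `σ`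
says `S² = 2S - X`, i.e. `(1 - S)² = 1 - X`, and the recursion for `κ` says `K = 1 + K S`, i.e.
`K (1 - S) = 1`. Hence `K² (1 - X) = (K (1 - S))² = 1`, so `K² = 1/(1 - X) = ∑ Xⁿ`: every
coefficient of `K²`, which is the convolution `∑ κ l κ (n - l)`, equals `1`.
-/

open PowerSeries Finset

namespace PowerSeries

variable {R : Type*}

theorem coeff_mk_mul_mk [CommSemiring R] (a b : ℕ → R) (n : ℕ) :
    coeff n (mk a * mk b) = ∑ l ∈ range (n + 1), a l * b (n - l) := by
  rw [coeff_mul, Nat.sum_antidiagonal_eq_sum_range_succ_mk]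
  simp only [coeff_mk]

theorem coeff_mk_mul_mk_of_apply_zero [CommSemiring R] {a : ℕ → R} (ha : a 0 = 0)
    (b : ℕ → R) (n : ℕ) :
    coeff n (mk a * mk b) = ∑ l ∈ Icc 1 n, a l * b (n - l) := by
  rw [coeff_mk_mul_mk, range_eq_Ico, sum_eq_sum_Ico_succ_bot n.succ_pos, ha, zero_mul, zero_add]
  rfl

theorem one_sub_mk_sq_of_rec [Field R] [NeZero (2 : R)] {σ : ℕ → R} (hσ0 : σ 0 = 0)
    (hσ1 : σ 1 = 1 / 2)
    (hσrec : ∀ n : ℕ, 2 ≤ n → σ n = (1 / 2) * ∑ l ∈ Ico 1 n, σ l * σ (n - l)) :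
    (1 - mk σ) ^ 2 = 1 - X := by
  suffices hsq : mk σ * mk σ = mk σ + mk σ - X by
    linear_combination hsq
  ext n
  rw [coeff_mk_mul_mk_of_apply_zero hσ0, map_sub, map_add, coeff_X, coeff_mk]
  rcases n with _ | _ | n
  · simp [hσ0]
  · rw [hσ1, add_halves]
    simp [hσ0]
  · rw [← Ico_add_one_right_eq_Icc, sum_Ico_succ_top (by omega), Nat.sub_self, hσ0, mul_zero,
      add_zero, hσrec _ (by omega), if_neg (by omega), sub_zero, ← add_mul, add_halves, one_mul]

theorem mk_mul_one_sub_mk_of_rec [CommRing R] {σ κ : ℕ → R} (hσ0 : σ 0 = 0)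
    (hκ0 : κ 0 = 1)
    (hκrec : ∀ n : ℕ, 1 ≤ n → κ n = ∑ m ∈ Icc 1 n, κ (n - m) * σ m) :
    mk κ * (1 - mk σ) = 1 := by
  ext n
  rw [mul_sub, mul_one, map_sub, mul_comm, coeff_mk_mul_mk_of_apply_zero hσ0, coeff_mk,
    coeff_one]
  rcases n with _ | n
  · simp [hκ0]
  · rw [hκrec _ (by omega), if_neg (by omega)]
    simp only [mul_comm, sub_self]

theorem eq_mk_one_of_mul_one_sub_X_eq_one [CommRing R] {A : R⟦X⟧} (h : A * (1 - X) = 1) :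
    A = mk 1 := by
  calc A = A * ((1 - X) * mk 1) := by rw [mul_comm (1 - X), mk_one_mul_one_sub_eq_one, mul_one]
    _ = mk 1 := by rw [← mul_assoc, h, one_mul]

end PowerSeries

theorem kappa_convolution_one (σ κ : ℕ → ℚ)
    (hσ0 : σ 0 = 0) (hσ1 : σ 1 = 1/2)
    (hσrec : ∀ n : ℕ, 2 ≤ n → σ n = (1/2) * ∑ l ∈ Finset.Ico 1 n, σ l * σ (n - l))
    (hκ0 : κ 0 = 1)
    (hκrec : ∀ n : ℕ, 1 ≤ n → κ n = ∑ m ∈ Finset.Icc 1 n, κ (n - m) * σ m) :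
    ∀ n : ℕ, ((1 : ℚ)/2) * ∑ l ∈ Finset.range (n + 1), κ l * κ (n - l) = 1/2 ∧
      ∑ l ∈ Finset.range (n + 1), κ l * κ (n - l) = 1 := by
  have hK : mk κ * (1 - mk σ) = 1 := mk_mul_one_sub_mk_of_rec hσ0 hκ0 hκrec
  have hS : (1 - mk σ) ^ 2 = 1 - X := one_sub_mk_sq_of_rec hσ0 hσ1 hσrec
  have hK_sq : mk κ * mk κ = (mk 1 : ℚ⟦X⟧) := by
    apply eq_mk_one_of_mul_one_sub_X_eq_one
    rw [← hS]
    linear_combination (mk κ * (1 - mk σ) + 1) * hK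
  intro n
  have hconv : ∑ l ∈ range (n + 1), κ l * κ (n - l) = 1 := by
    rw [← coeff_mk_mul_mk, hK_sq, coeff_mk, Pi.one_apply]
  exact ⟨by rw [hconv, mul_one], hconv⟩
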